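/- arXiv:1107.3493 — 2 statements merged into one kernel-verified Lean document; each statement's English description precedes it below -/
import Mathlib

section
/- Let a < b be real numbers and let (g_0,…,g_n) be an M-system of continuous functions on [a,b], that is, (g_0,…,g_k) is a T-system on [a,b] for each k = 0,…,n. Then there exists a sequence of signs (s_0,…,s_n) ∈ {−1,1}^{n+1} such that (s_0 g_0,…,s_n g_n) is an M_+-system on [a,b]. -/
/-!
The points `a ≤ x_0 < ⋯ < x_k ≤ b` form a convex, hence connected, set on which the
determinant `D_k(x) = det (g_i(x_j))_{i,j ≤ k}` is continuous and, by the T-system property,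
never zero; so `D_k` has a constant sign `ε_k`. With `ε_{-1} = 1` and `s_k = ε_k ε_{k-1}`,
the product `s_0 ⋯ s_k` telescopes to `ε_k`, and multiplying the rows of `D_k` by the `s_i`
multiplies it by exactly this product, making it positive.
-/

/-- `(g_0, …, g_k)` is a T-system on `[a, b]`: the determinant `det (g_i(x_j))`
is nonzero for any `k + 1` distinct points `x_0, …, x_k` of `[a, b]`. -/
def IsTSystemOn {k : ℕ} (a b : ℝ) (g : Fin (k + 1) → ℝ → ℝ) : Prop :=
  ∀ x : Fin (k + 1) → ℝ, (∀ j, x j ∈ Set.Icc a b) → Function.Injective x →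
    (Matrix.of fun i j => g i (x j)).det ≠ 0

/-- `(g_0, …, g_k)` is a T₊-system on `[a, b]`: the determinant
`det (g_i(x_j))` is strictly positive whenever `a ≤ x_0 < … < x_k ≤ b`. -/
def IsTPlusSystem {k : ℕ} (a b : ℝ) (g : Fin (k + 1) → ℝ → ℝ) : Prop :=
  ∀ x : Fin (k + 1) → ℝ, StrictMono x → (∀ j, x j ∈ Set.Icc a b) →
    0 < (Matrix.of fun i j => g i (x j)).det

open Finset

theorem convex_setOf_strictMono {ι : Type*} [Preorder ι] :
    Convex ℝ {x : ι → ℝ | StrictMono x} := by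
  intro x hx y hy t u ht hu htu i j hij
  simp only [Pi.add_apply, Pi.smul_apply, smul_eq_mul]
  rcases ht.lt_or_eq with ht_pos | rfl
  · nlinarith [mul_lt_mul_of_pos_left (hx hij) ht_pos, mul_le_mul_of_nonneg_left (hy hij).le hu]
  · have hu_pos : 0 < u := by linarith
    nlinarith [mul_lt_mul_of_pos_left (hy hij) hu_pos]

theorem IsPreconnected.exists_sign_mul_pos {α : Type*} [TopologicalSpace α] {S : Set α}
    {f : α → ℝ} (hS : IsPreconnected S) (hf : ContinuousOn f S) (hne : ∀ x ∈ S, f x ≠ 0) :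
    ∃ ε : ℝ, (ε = 1 ∨ ε = -1) ∧ ∀ x ∈ S, 0 < ε * f x := by
  have hcover : f '' S ⊆ Set.Iio 0 ∪ Set.Ioi 0 := by
    rintro _ ⟨x, hx, rfl⟩
    exact (hne x hx).lt_or_gt
  rcases (hS.image f hf).subset_or_subset isOpen_Iio isOpen_Ioi
      Set.Ioi_disjoint_Iio_same.symm hcover with hneg | hpos
  · refine ⟨-1, Or.inr rfl, fun x hx => ?_⟩
    have : f x < 0 := hneg ⟨x, hx, rfl⟩
    linarith
  · exact ⟨1, Or.inl rfl, fun x hx => by simpa using hpos ⟨x, hx, rfl⟩⟩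

theorem IsTSystemOn.exists_sign_mul_det_pos {k : ℕ} {a b : ℝ} {g : Fin (k + 1) → ℝ → ℝ}
    (hT : IsTSystemOn a b g) (hg : ∀ i, ContinuousOn (g i) (Set.Icc a b)) :
    ∃ ε : ℝ, (ε = 1 ∨ ε = -1) ∧ ∀ x : Fin (k + 1) → ℝ, StrictMono x →
      (∀ j, x j ∈ Set.Icc a b) → 0 < ε * (Matrix.of fun i j => g i (x j)).det := by
  set S : Set (Fin (k + 1) → ℝ) := {x | StrictMono x} ∩ Set.univ.pi fun _ => Set.Icc a b
  have hS : IsPreconnected S :=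
    (convex_setOf_strictMono.inter (convex_pi fun _ _ => convex_Icc a b)).isPreconnected
  have hmatrix : ContinuousOn
      (fun x : Fin (k + 1) → ℝ => Matrix.of fun i j => g i (x j)) S :=
    continuousOn_pi.2 fun i => continuousOn_pi.2 fun j =>
      (hg i).comp (continuous_apply j).continuousOn fun x hx => hx.2 j trivial
  obtain ⟨ε, hε, hpos⟩ := hS.exists_sign_mul_pos
    (continuous_id.matrix_det.comp_continuousOn hmatrix)
    fun x hx => hT x (fun j => hx.2 j trivial) hx.1.injective
  exact ⟨ε, hε, fun x hx hmem => hpos x ⟨hx, fun j _ => hmem j⟩⟩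

theorem isTPlusSystem_mul_iff {k : ℕ} {a b : ℝ} (c : Fin (k + 1) → ℝ)
    (g : Fin (k + 1) → ℝ → ℝ) :
    IsTPlusSystem a b (fun i x => c i * g i x) ↔ ∀ x : Fin (k + 1) → ℝ, StrictMono x →
      (∀ j, x j ∈ Set.Icc a b) → 0 < (∏ i, c i) * (Matrix.of fun i j => g i (x j)).det := by
  simp only [IsTPlusSystem, ← Matrix.det_mul_column, Matrix.of_apply]

theorem exists_signs_prod_range_succ_eq (ε : ℕ → ℝ) (hε : ∀ k, ε k = 1 ∨ ε k = -1) :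
    ∃ s : ℕ → ℝ, (∀ i, s i = 1 ∨ s i = -1) ∧ ∀ k, ∏ i ∈ range (k + 1), s i = ε k := by
  have hsq : ∀ k, ε k * ε k = 1 := fun k => by rcases hε k with h | h <;> rw [h] <;> norm_num
  refine ⟨fun | 0 => ε 0 | m + 1 => ε (m + 1) * ε m, ?_, ?_⟩
  · rintro (_ | m)
    · exact hε 0
    · rcases hε (m + 1) with h | h <;> rcases hε m with h' | h' <;> simp [h, h']
  · intro k
    induction k with
    | zero => simp
    | succ m ih =>
      rw [prod_range_succ, ih]
      linear_combination ε (m + 1) * hsq m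

/-- If `(g_0, …, g_n)` is an M-system of continuous functions on `[a, b]`
(i.e., each initial segment `(g_0, …, g_k)` is a T-system on `[a, b]`), then
there is a choice of signs `s_i ∈ {-1, 1}` such that `(s_0 g_0, …, s_n g_n)`
is an M₊-system on `[a, b]`. -/
theorem msystem_signs_mplus (a b : ℝ) (n : ℕ)
    (g : Fin (n + 1) → ℝ → ℝ) (hg : ∀ i, ContinuousOn (g i) (Set.Icc a b))
    (hM : ∀ k : ℕ, ∀ hk : k ≤ n,
      IsTSystemOn a b (fun i : Fin (k + 1) => g (Fin.castLE (by omega) i))) :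
    ∃ s : Fin (n + 1) → ℝ, (∀ i, s i = 1 ∨ s i = -1) ∧
      ∀ k : ℕ, ∀ hk : k ≤ n,
        IsTPlusSystem a b (fun i : Fin (k + 1) => fun x =>
          s (Fin.castLE (by omega) i) * g (Fin.castLE (by omega) i) x) := by
  have hsign : ∀ k, ∃ ε : ℝ, (ε = 1 ∨ ε = -1) ∧ ∀ hk : k ≤ n, ∀ x : Fin (k + 1) → ℝ,
      StrictMono x → (∀ j, x j ∈ Set.Icc a b) →
        0 < ε * (Matrix.of fun i j => g (Fin.castLE (by omega) i) (x j)).det := by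
    intro k
    by_cases hk : k ≤ n
    · obtain ⟨ε, hε, hpos⟩ := (hM k hk).exists_sign_mul_det_pos fun i => hg _
      exact ⟨ε, hε, fun _ => hpos⟩
    · exact ⟨1, Or.inl rfl, fun hk' => absurd hk' hk⟩
  choose ε hε hε_pos using hsign
  obtain ⟨s, hs, hprod⟩ := exists_signs_prod_range_succ_eq ε hε
  refine ⟨fun i => s i, fun i => hs i, fun k hk => ?_⟩
  refine (isTPlusSystem_mul_iff (fun i => s (Fin.castLE (by omega) i : Fin (n + 1))) _).2 ?_
  have hprod_fin : ∏ i : Fin (k + 1), s (Fin.castLE (by omega) i : Fin (n + 1)) = ε k := by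
    simpa only [Fin.val_castLE] using (Fin.prod_univ_eq_prod_range s (k + 1)).trans (hprod k)
  simpa only [hprod_fin] using hε_pos k hk
end

section
/- Let a < b be real numbers and let g_0,…,g_{n+1} be continuous functions on [a,b] such that both (g_0,…,g_n) and (g_0,…,g_{n+1}) are T_+-systems on [a,b]. Let c = (c_0,…,c_n) ∈ ℝ^{n+1} be such that M_c ≠ ∅. Then there exists a unique measure μ_max ∈ M_c such that ∫ g_{n+1} dμ_max ≥ ∫ g_{n+1} dμ for all μ ∈ M_c, and there exists a unique measure μ_min ∈ M_c such that ∫ g_{n+1} dμ_min ≤ ∫ g_{n+1} dμ for all μ ∈ M_c. -/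
/-!
Work with moment vectors in `ℝ^(n+2)` with respect to `G = (g_0, …, g_n, g_{n+1})`. The moment
vectors of finite measures on `[a, b]` form the cone spanned by the moment curve `t ↦ (G_i t)_i`,
and every point of that cone is the moment vector of a finitely atomic measure; so the moment
vectors of `M_c` are the slice of the cone where the first `n + 1` coordinates equal `c`.
Since `(g_0, …, g_n)` is T₊, `0` is not in the convex hull of its moment curve (a vanishing
nonnegative combination of `n + 2` ordered curve points would be proportional to the alternating
cofactors), which bounds the mass of the measures in `M_c`; hence the slice is compact and the
last coordinate `∫ g_{n+1}` attains its extrema. The slice is a segment in the direction of the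
last coordinate, so an extremal point lies on the boundary of the cone. A supporting hyperplane
there is a nonzero polynomial `∑ α_i G_i ≤ 0` on `[a, b]` vanishing on the support of every
measure with that moment vector. As `G` is a T-system it has at most `n + 1` zeros, and measures
carried by at most `n + 2` points are determined by their `G`-moments.
-/

open MeasureTheory

/-- `μ` belongs to the moment set `M_c`: it is a finite nonnegative Borel
measure on `[a, b]` (i.e. vanishing outside `[a, b]`) with `∫ g_i dμ = c_i`
for all `i`. -/
def MemMc (a b : ℝ) {n : ℕ} (g : Fin (n + 1) → ℝ → ℝ) (c : Fin (n + 1) → ℝ)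
    (μ : Measure ℝ) : Prop :=
  IsFiniteMeasure μ ∧ μ (Set.Icc a b)ᶜ = 0 ∧ ∀ i, ∫ x, g i x ∂μ = c i

open Set

theorem isCompact_convexHull {E : Type*} [NormedAddCommGroup E] [NormedSpace ℝ E]
    [FiniteDimensional ℝ E] {s : Set E} (hs : IsCompact s) : IsCompact (convexHull ℝ s) := by
  let combo : (k : ℕ) → (Fin k → ℝ) × (Fin k → E) → E := fun _ p => ∑ i, p.1 i • p.2 i
  have hcarath : convexHull ℝ s = ⋃ k : Fin (Module.finrank ℝ E + 2),
      combo k '' (stdSimplex ℝ (Fin k) ×ˢ univ.pi fun _ => s) := by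
    refine Subset.antisymm (fun x hx => ?_) (iUnion_subset fun k => ?_)
    · obtain ⟨ι, _, z, w, hzs, hz, hw0, hw1, rfl⟩ := eq_pos_convex_span_of_mem_convexHull hx
      have hcard : Fintype.card ι < Module.finrank ℝ E + 2 :=
        Nat.lt_succ_of_le (hz.card_le_finrank_succ.trans (by simpa using Submodule.finrank_le _))
      let e := Fintype.equivFin ι
      refine mem_iUnion.2 ⟨⟨_, hcard⟩, (w ∘ e.symm, z ∘ e.symm),
        ⟨⟨fun i => (hw0 _).le, ?_⟩, fun i _ => hzs (mem_range_self _)⟩, ?_⟩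
      · simpa [hw1] using e.symm.sum_comp w
      · exact e.symm.sum_comp fun i => w i • z i
    · rintro _ ⟨⟨w, z⟩, ⟨hw, hz⟩, rfl⟩
      exact mem_convexHull_of_exists_fintype w z hw.1 hw.2 (fun i => hz i (mem_univ i)) rfl
  rw [hcarath]
  exact isCompact_iUnion fun k => ((isCompact_stdSimplex _ _).prod
    (isCompact_univ_pi fun _ => hs)).image (by fun_prop)

theorem PointedCone.exists_forall_apply_nonpos_of_notMem_interior {E : Type*} [TopologicalSpace E]
    [AddCommGroup E] [Module ℝ E] [IsTopologicalAddGroup E] [ContinuousSMul ℝ E]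
    {C : PointedCone ℝ E} (hC : (interior (C : Set E)).Nonempty) {p : E} (hpC : p ∈ C)
    (hp : p ∉ interior (C : Set E)) :
    ∃ f : StrongDual ℝ E, f ≠ 0 ∧ (∀ y ∈ C, f y ≤ 0) ∧ f p = 0 := by
  obtain ⟨f, hf0, hf⟩ := geometric_hahn_banach_of_nonempty_interior_point C.convex hp hC
  have h2p := hf _ (C.smul_mem zero_le_two hpC)
  have h0 := hf 0 C.zero_mem
  rw [map_smul, smul_eq_mul] at h2p
  rw [map_zero] at h0
  have hfp : f p = 0 := by linarith
  exact ⟨f, hf0, fun y hy => hfp ▸ hf y hy, hfp⟩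

theorem MeasureTheory.Measure.eq_of_ae_mem_finset {α : Type*} [MeasurableSpace α]
    [MeasurableSingletonClass α] {μ ν : Measure α} {Z : Finset α} (hμ : ∀ᵐ x ∂μ, x ∈ Z)
    (hν : ∀ᵐ x ∂ν, x ∈ Z) (h : ∀ z ∈ Z, μ {z} = ν {z}) : μ = ν := by
  classical
  rw [← Measure.restrict_eq_self_of_ae_mem hμ, ← Measure.restrict_eq_self_of_ae_mem hν]
  ext s hs
  have hsZ : s ∩ ↑Z = ↑(Z.filter (· ∈ s)) := by ext; simp [and_comm]
  rw [Measure.restrict_apply hs, Measure.restrict_apply hs, hsZ, ← sum_measure_singleton,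
    ← sum_measure_singleton]
  exact Finset.sum_congr rfl fun z hz => h z (Finset.mem_filter.1 hz).1

theorem integrable_of_continuousOn_of_ae_mem {α E : Type*} [MeasurableSpace α]
    [TopologicalSpace α] [OpensMeasurableSpace α] [T2Space α] [NormedAddCommGroup E]
    {μ : Measure α} [IsFiniteMeasure μ] {K : Set α} {f : α → E} (hK : IsCompact K)
    (hf : ContinuousOn f K) (hμ : ∀ᵐ x ∂μ, x ∈ K) : Integrable f μ := by
  rw [← Measure.restrict_eq_self_of_ae_mem hμ]
  exact hf.integrableOn_compact hK

theorem Matrix.sum_alternating_det_submatrix_smul_col {R : Type*} [CommRing R] {n : ℕ}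
    (M : Matrix (Fin (n + 1)) (Fin (n + 2)) R) :
    ∑ j : Fin (n + 2), ((-1) ^ (j : ℕ) * (M.submatrix id j.succAbove).det) • M.col j = 0 := by
  funext i
  let A : Matrix (Fin (n + 2)) (Fin (n + 2)) R := Matrix.of (Matrix.vecCons (M i) M)
  have hA : A.det = 0 := Matrix.det_zero_of_row_eq (Fin.succ_ne_zero i).symm rfl
  rw [Matrix.det_succ_row_zero] at hA
  rw [Finset.sum_apply, Pi.zero_apply, ← hA]
  refine Finset.sum_congr rfl fun j _ => ?_
  have hminor : A.submatrix Fin.succ j.succAbove = M.submatrix id j.succAbove := rfl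
  rw [hminor, Pi.smul_apply, smul_eq_mul, Matrix.col_apply]
  change _ = (-1) ^ (j : ℕ) * M i j * _
  ring

theorem exists_strictMono_subset_range {α : Type*} [LinearOrder α] {S : Set α} (hS : S.Infinite)
    {s : Finset α} (hs : ↑s ⊆ S) {N : ℕ} (hN : s.card ≤ N) :
    ∃ x : Fin N → α, StrictMono x ∧ (∀ j, x j ∈ S) ∧ ↑s ⊆ range x := by
  obtain ⟨t, hts, htcard⟩ := (hS.sdiff s.finite_toSet).exists_subset_card_eq (N - s.card)
  have hcard : (s ∪ t).card = N := by
    rw [Finset.card_union_of_disjoint (Finset.disjoint_left.2 fun z hz hzt => (hts hzt).2 hz)]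
    omega
  refine ⟨(s ∪ t).orderEmbOfFin hcard, (Finset.orderEmbOfFin _ _).strictMono, fun j => ?_, ?_⟩
  · rcases Finset.mem_union.1 ((s ∪ t).orderEmbOfFin_mem hcard j) with h | h
    exacts [hs h, (hts h).1]
  · rw [Finset.range_orderEmbOfFin]
    exact Finset.coe_subset.2 Finset.subset_union_left

section Moments

variable {ι : Type*} {G : ι → ℝ → ℝ} {μ : Measure ℝ} {K S : Set ℝ}

def momentCurve (G : ι → ℝ → ℝ) (t : ℝ) : ι → ℝ := fun i => G i t

noncomputable def momentVector (G : ι → ℝ → ℝ) (μ : Measure ℝ) : ι → ℝ :=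
  fun i => ∫ x, G i x ∂μ

abbrev momentCone (G : ι → ℝ → ℝ) (S : Set ℝ) : PointedCone ℝ (ι → ℝ) :=
  PointedCone.hull ℝ (momentCurve G '' S)

theorem continuousOn_momentCurve (hG : ∀ i, ContinuousOn (G i) K) :
    ContinuousOn (momentCurve G) K :=
  continuousOn_pi.2 hG

theorem convexHull_subset_momentCone :
    convexHull ℝ (momentCurve G '' S) ⊆ momentCone G S :=
  convexHull_min PointedCone.subset_hull (PointedCone.convex _)

theorem exists_momentVector_eq {y : ι → ℝ} (hy : y ∈ momentCone G S) :
    ∃ μ : Measure ℝ, IsFiniteMeasure μ ∧ (∀ᵐ x ∂μ, x ∈ S) ∧ momentVector G μ = y := by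
  obtain ⟨n, w, v, rfl⟩ := Submodule.mem_span_set'.1 hy
  choose t htS htv using fun k => (v k).2
  refine ⟨∑ k, (w k : ℝ).toNNReal • Measure.dirac (t k), inferInstance, ?_, ?_⟩
  · rw [← Measure.sum_fintype, Measure.ae_sum_iff]
    refine fun k => Measure.ae_smul_measure ?_ _
    rw [ae_dirac_eq]
    exact htS k
  · funext i
    rw [momentVector, integral_finsetSum_measure fun k _ =>
      (integrable_dirac (by simp)).smul_measure_nnreal]
    simp [← htv, momentCurve, NNReal.smul_def, ← Nonneg.coe_smul, (w _).2]

theorem momentVector_eq_sum_of_ae_mem_finset [IsFiniteMeasure μ] {Z : Finset ℝ}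
    (hμ : ∀ᵐ x ∂μ, x ∈ Z) : momentVector G μ = ∑ z ∈ Z, μ.real {z} • momentCurve G z := by
  funext i
  have h := setIntegral_finset (μ := μ) (f := G i) Z IntegrableOn.finset
  rw [Measure.restrict_eq_self_of_ae_mem hμ] at h
  simpa [momentVector, momentCurve] using h

variable [Fintype ι]

theorem momentVector_eq_integral [IsFiniteMeasure μ] (hK : IsCompact K)
    (hG : ∀ i, ContinuousOn (G i) K) (hμ : ∀ᵐ x ∂μ, x ∈ K) :
    momentVector G μ = ∫ x, momentCurve G x ∂μ :=
  funext fun i =>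
    (eval_integral (fun i => integrable_of_continuousOn_of_ae_mem hK (hG i) hμ) i).symm

theorem exists_momentVector_eq_smul [IsFiniteMeasure μ] (hK : IsCompact K) (hKne : K.Nonempty)
    (hG : ∀ i, ContinuousOn (G i) K) (hμ : ∀ᵐ x ∂μ, x ∈ K) :
    ∃ z ∈ convexHull ℝ (momentCurve G '' K), momentVector G μ = μ.real univ • z := by
  have hcurve := continuousOn_momentCurve hG
  rcases eq_zero_or_neZero μ with rfl | _
  · obtain ⟨t, ht⟩ := hKne
    refine ⟨momentCurve G t, subset_convexHull ℝ _ (mem_image_of_mem _ ht), ?_⟩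
    funext i
    simp [momentVector]
  refine ⟨⨍ x, momentCurve G x ∂μ, ?_, ?_⟩
  · exact (convex_convexHull ℝ _).average_mem
      (isCompact_convexHull (hK.image_of_continuousOn hcurve)).isClosed
      (hμ.mono fun x hx => subset_convexHull ℝ _ (mem_image_of_mem _ hx))
      (integrable_of_continuousOn_of_ae_mem hK hcurve hμ)
  · rw [measure_smul_average, momentVector_eq_integral hK hG hμ]

theorem momentVector_mem_momentCone [IsFiniteMeasure μ] (hK : IsCompact K) (hKne : K.Nonempty)
    (hG : ∀ i, ContinuousOn (G i) K) (hμ : ∀ᵐ x ∂μ, x ∈ K) :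
    momentVector G μ ∈ momentCone G K := by
  obtain ⟨z, hz, hμz⟩ := exists_momentVector_eq_smul hK hKne hG hμ
  rw [hμz]
  exact (momentCone G K).smul_mem measureReal_nonneg (convexHull_subset_momentCone hz)

theorem ae_apply_momentCurve_eq_zero [IsFiniteMeasure μ] (hK : IsCompact K)
    (hG : ∀ i, ContinuousOn (G i) K) (hμ : ∀ᵐ x ∂μ, x ∈ K) {f : StrongDual ℝ (ι → ℝ)}
    (hfK : ∀ t ∈ K, f (momentCurve G t) ≤ 0) (hfμ : f (momentVector G μ) = 0) :
    ∀ᵐ t ∂μ, f (momentCurve G t) = 0 := by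
  have hint : Integrable (fun t => -f (momentCurve G t)) μ :=
    integrable_of_continuousOn_of_ae_mem hK
      (f.continuous.comp_continuousOn (continuousOn_momentCurve hG)).neg hμ
  have hzero : ∫ t, -f (momentCurve G t) ∂μ = 0 := by
    rw [integral_neg, f.integral_comp_comm (integrable_of_continuousOn_of_ae_mem hK
      (continuousOn_momentCurve hG) hμ), ← momentVector_eq_integral hK hG hμ, hfμ, neg_zero]
  filter_upwards [(integral_eq_zero_iff_of_nonneg_ae (hμ.mono fun t ht => by
    simpa using hfK t ht) hint).1 hzero] with t ht
  simpa using ht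

end Moments

def IsTSystem {m : ℕ} (a b : ℝ) (G : Fin m → ℝ → ℝ) : Prop :=
  ∀ x : Fin m → ℝ, StrictMono x → (∀ j, x j ∈ Icc a b) →
    (Matrix.of fun i j => G i (x j)).det ≠ 0

theorem IsTPlusSystem.isTSystem {k : ℕ} {a b : ℝ} {g : Fin (k + 1) → ℝ → ℝ}
    (hg : IsTPlusSystem a b g) : IsTSystem a b g :=
  fun x hx hxX => (hg x hx hxX).ne'

namespace IsTSystem

variable {a b : ℝ} {m : ℕ} {G : Fin m → ℝ → ℝ} {μ ν : Measure ℝ}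

theorem linearIndependent (hG : IsTSystem a b G) {x : Fin m → ℝ} (hx : StrictMono x)
    (hxX : ∀ j, x j ∈ Icc a b) : LinearIndependent ℝ fun j => momentCurve G (x j) :=
  Matrix.linearIndependent_cols_of_isUnit (A := Matrix.of fun i j => G i (x j))
    (Matrix.isUnit_iff_isUnit_det _ |>.2 (hG x hx hxX).isUnit)

theorem span_eq_top (hG : IsTSystem a b G) {x : Fin m → ℝ} (hx : StrictMono x)
    (hxX : ∀ j, x j ∈ Icc a b) : Submodule.span ℝ (range fun j => momentCurve G (x j)) = ⊤ :=
  (hG.linearIndependent hx hxX).span_eq_top_of_card_eq_finrank' (by simp)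

theorem linearIndepOn (hG : IsTSystem a b G) (hab : a < b) {s : Finset ℝ}
    (hs : ↑s ⊆ Icc a b) (hcard : s.card ≤ m) : LinearIndepOn ℝ (momentCurve G) (s : Set ℝ) := by
  obtain ⟨x, hx, hxX, hsx⟩ := exists_strictMono_subset_range (Icc_infinite hab) hs hcard
  exact ((linearIndepOn_range_iff hx.injective _).2 (hG.linearIndependent hx hxX)).mono hsx

theorem interior_momentCone_nonempty (hG : IsTSystem a b G) (hab : a < b) :
    (interior (momentCone G (Icc a b) : Set (Fin m → ℝ))).Nonempty := by
  obtain ⟨x, hx, hxX, -⟩ :=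
    exists_strictMono_subset_range (Icc_infinite hab) (s := ∅) (by simp) (N := m) (by simp)
  let e := Module.Basis.mk (hG.linearIndependent hx hxX) (hG.span_eq_top hx hxX).ge
  let U : Set (Fin m → ℝ) := ⋂ j, {y | 0 < e.coord j y}
  have hU : IsOpen U := isOpen_iInter_of_finite fun j =>
    isOpen_lt continuous_const (e.coord j).continuous_of_finiteDimensional
  have hUcone : U ⊆ momentCone G (Icc a b) := fun y hy => by
    rw [← e.sum_repr y]
    refine Submodule.sum_mem _ fun j _ => (momentCone G _).smul_mem (mem_iInter.1 hy j).le ?_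
    rw [Module.Basis.mk_apply]
    exact PointedCone.subset_hull (mem_image_of_mem _ (hxX j))
  refine ⟨e.equivFun.symm 1, interior_maximal hUcone hU (mem_iInter.2 fun j => ?_)⟩
  simp [Module.Basis.coord_apply]

theorem eq_zero_of_map_momentCurve_eq_zero (hG : IsTSystem a b G) {x : Fin m → ℝ}
    (hx : StrictMono x) (hxX : ∀ j, x j ∈ Icc a b) {f : (Fin m → ℝ) →ₗ[ℝ] ℝ}
    (hf : ∀ j, f (momentCurve G (x j)) = 0) : f = 0 :=
  LinearMap.ext_on_range (hG.span_eq_top hx hxX) (by simpa using hf)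

theorem exists_finset_zeros_card_lt (hG : IsTSystem a b G)
    {f : (Fin m → ℝ) →ₗ[ℝ] ℝ} (hf : f ≠ 0) :
    ∃ Z : Finset ℝ, ↑Z = {t ∈ Icc a b | f (momentCurve G t) = 0} ∧ Z.card < m := by
  have hcard : ∀ s : Finset ℝ, ↑s ⊆ {t ∈ Icc a b | f (momentCurve G t) = 0} → s.card < m := by
    intro s hs
    by_contra! hle
    obtain ⟨s', hs's, hcard⟩ := Finset.exists_subset_card_eq hle
    have hmem : ∀ j, s'.orderEmbOfFin hcard j ∈ {t ∈ Icc a b | f (momentCurve G t) = 0} :=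
      fun j => hs (hs's (s'.orderEmbOfFin_mem hcard j))
    exact hf (hG.eq_zero_of_map_momentCurve_eq_zero (s'.orderEmbOfFin hcard).strictMono
      (fun j => (hmem j).1) fun j => (hmem j).2)
  have hfin : {t ∈ Icc a b | f (momentCurve G t) = 0}.Finite := by
    by_contra hinf
    obtain ⟨s, hs, hsm⟩ := Set.Infinite.exists_subset_card_eq hinf m
    exact (hcard s hs).ne hsm
  exact ⟨hfin.toFinset, hfin.coe_toFinset, hcard _ hfin.coe_toFinset.subset⟩

theorem measure_eq_of_momentVector_eq_of_ae_mem_finset (hG : IsTSystem a b G) (hab : a < b)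
    [IsFiniteMeasure μ] [IsFiniteMeasure ν] {Z : Finset ℝ} (hZX : ↑Z ⊆ Icc a b) (hZ : Z.card ≤ m)
    (hμ : ∀ᵐ x ∂μ, x ∈ Z) (hν : ∀ᵐ x ∂ν, x ∈ Z) (h : momentVector G μ = momentVector G ν) :
    μ = ν := by
  rw [momentVector_eq_sum_of_ae_mem_finset hμ, momentVector_eq_sum_of_ae_mem_finset hν,
    ← sub_eq_zero, ← Finset.sum_sub_distrib] at h
  simp_rw [← sub_smul] at h
  refine Measure.eq_of_ae_mem_finset hμ hν fun z hz => ?_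
  have hz := linearIndepOn_finset_iff.1 (hG.linearIndepOn hab hZX hZ) _ h z hz
  exact (measureReal_eq_measureReal_iff (measure_ne_top _ _) (measure_ne_top _ _)).1
    (sub_eq_zero.1 hz)

theorem eq_of_momentVector_eq_of_notMem_interior (hG : IsTSystem a b G) (hab : a < b)
    (hGc : ∀ i, ContinuousOn (G i) (Icc a b)) [IsFiniteMeasure μ] [IsFiniteMeasure ν]
    (hμ : ∀ᵐ x ∂μ, x ∈ Icc a b) (hν : ∀ᵐ x ∂ν, x ∈ Icc a b)
    (h : momentVector G μ = momentVector G ν)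
    (hint : momentVector G μ ∉ interior (momentCone G (Icc a b) : Set (Fin m → ℝ))) : μ = ν := by
  obtain ⟨f, hf0, hfC, hfμ⟩ := PointedCone.exists_forall_apply_nonpos_of_notMem_interior
    (hG.interior_momentCone_nonempty hab)
    (momentVector_mem_momentCone isCompact_Icc (nonempty_Icc.2 hab.le) hGc hμ) hint
  have hfX : ∀ t ∈ Icc a b, f (momentCurve G t) ≤ 0 :=
    fun t ht => hfC _ (PointedCone.subset_hull (mem_image_of_mem _ ht))
  obtain ⟨Z, hZ, hZm⟩ := hG.exists_finset_zeros_card_lt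
    (f := f.toLinearMap) fun h0 => hf0 (ContinuousLinearMap.coe_injective h0)
  have hsupp : ∀ κ : Measure ℝ, [IsFiniteMeasure κ] → (∀ᵐ x ∂κ, x ∈ Icc a b) →
      f (momentVector G κ) = 0 → ∀ᵐ x ∂κ, x ∈ Z := fun κ _ hκ hfκ => by
    filter_upwards [hκ, ae_apply_momentCurve_eq_zero isCompact_Icc hGc hκ hfX hfκ] with t ht hft
    rw [← Finset.mem_coe, hZ]
    exact ⟨ht, hft⟩
  exact hG.measure_eq_of_momentVector_eq_of_ae_mem_finset hab (hZ ▸ fun _ ht => ht.1) hZm.le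
    (hsupp μ hμ hfμ) (hsupp ν hν (h ▸ hfμ)) h

end IsTSystem

namespace IsTPlusSystem

variable {a b : ℝ} {n : ℕ} {g : Fin (n + 1) → ℝ → ℝ}

theorem eq_zero_of_sum_smul_eq_zero (hg : IsTPlusSystem a b g) {x : Fin (n + 2) → ℝ}
    (hx : StrictMono x) (hxX : ∀ j, x j ∈ Icc a b) {w : Fin (n + 2) → ℝ} (hw0 : ∀ j, 0 ≤ w j)
    (hw : ∑ j, w j • momentCurve g (x j) = 0) : w = 0 := by
  let M : Matrix (Fin (n + 1)) (Fin (n + 2)) ℝ := Matrix.of fun i j => g i (x j)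
  let D : Fin (n + 2) → ℝ := fun j => (M.submatrix id j.succAbove).det
  have hD : ∀ j, 0 < D j := fun j =>
    hg _ (hx.comp (Fin.strictMono_succAbove j)) fun _ => hxX _
  have hcof : ∑ j : Fin (n + 2), ((-1) ^ (j : ℕ) * D j) • momentCurve g (x j) = 0 :=
    M.sum_alternating_det_submatrix_smul_col
  -- `u` is a kernel vector vanishing at `0`, hence `0`: `w` is a multiple of the cofactors.
  let u : Fin (n + 2) → ℝ := fun j => D 0 * w j - w 0 * ((-1) ^ (j : ℕ) * D j)
  have hu : ∑ j, u j • momentCurve g (x j) = 0 := calc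
    _ = D 0 • ∑ j, w j • momentCurve g (x j) -
        w 0 • ∑ j : Fin (n + 2), ((-1) ^ (j : ℕ) * D j) • momentCurve g (x j) := by
      simp only [u, sub_smul, Finset.sum_sub_distrib, Finset.smul_sum, mul_smul]
    _ = 0 := by rw [hw, hcof, smul_zero, smul_zero, sub_zero]
  have hu0 : u 0 = 0 := by simp [u, mul_comm]
  have husucc : ∀ k : Fin (n + 1), u k.succ = 0 := by
    rw [Fin.sum_univ_succ, hu0, zero_smul, zero_add] at hu
    exact Fintype.linearIndependent_iff.1 (hg.isTSystem.linearIndependent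
      (hx.comp (Fin.strictMono_succ)) fun _ => hxX _) _ hu
  have hw00 : w 0 = 0 := by
    have h1 := husucc 0
    simp only [u, Fin.val_succ, Fin.val_zero, zero_add, pow_one] at h1
    have hprod : w 0 * D (Fin.succ 0) = 0 := by
      linarith [mul_nonneg (hD 0).le (hw0 (Fin.succ 0)), mul_nonneg (hw0 0) (hD (Fin.succ 0)).le]
    exact (mul_eq_zero.1 hprod).resolve_right (hD _).ne'
  funext j
  have huj : u j = 0 := Fin.cases hu0 husucc j
  simp only [u, hw00, zero_mul, sub_zero] at huj
  exact (mul_eq_zero.1 huj).resolve_left (hD 0).ne'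

theorem zero_notMem_convexHull (hg : IsTPlusSystem a b g) (hab : a < b) :
    (0 : Fin (n + 1) → ℝ) ∉ convexHull ℝ (momentCurve g '' Icc a b) := by
  classical
  intro h0
  obtain ⟨ι, _, z, w, hzX, hz, hw0, hw1, hsum⟩ := eq_pos_convex_span_of_mem_convexHull h0
  choose t htX htz using fun i => hzX (mem_range_self i)
  have hcard : (Finset.univ.image t).card ≤ n + 2 := Finset.card_image_le.trans
    (hz.card_le_finrank_succ.trans (by simpa using Submodule.finrank_le (vectorSpan ℝ (range z))))
  obtain ⟨x, hx, hxX, htx⟩ := exists_strictMono_subset_range (Icc_infinite hab)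
    (by simpa [Set.subset_def] using htX) hcard
  choose k hk using fun i => htx (Finset.mem_coe.2 (Finset.mem_image_of_mem t (Finset.mem_univ i)))
  -- Carathéodory leaves at most `n + 2` nodes; lump the weights onto the sorted nodes `x`.
  let W : Fin (n + 2) → ℝ := fun j => ∑ i with k i = j, w i
  have hW : W = 0 := by
    refine hg.eq_zero_of_sum_smul_eq_zero hx hxX
      (fun j => Finset.sum_nonneg fun i _ => (hw0 i).le) ?_
    rw [← hsum, ← Finset.sum_fiberwise Finset.univ k]
    refine Finset.sum_congr rfl fun j _ => ?_
    rw [Finset.sum_smul]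
    refine Finset.sum_congr rfl fun i hi => ?_
    rw [← htz, ← hk, (Finset.mem_filter.1 hi).2]
  have hW1 : ∑ j, W j = 1 := by rw [Finset.sum_fiberwise]; exact hw1
  simp [hW] at hW1

end IsTPlusSystem

section MomentProblem

variable {a b : ℝ} {n : ℕ} {g : Fin (n + 1) → ℝ → ℝ} {gtop : ℝ → ℝ} {c : Fin (n + 1) → ℝ}
  {μ ν : Measure ℝ}

theorem memMc_iff : MemMc a b g c μ ↔
    IsFiniteMeasure μ ∧ (∀ᵐ x ∂μ, x ∈ Icc a b) ∧ momentVector g μ = c := by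
  rw [MemMc, ae_iff, funext_iff]
  rfl

theorem continuousOn_snoc_apply {K : Set ℝ} (hg : ∀ i, ContinuousOn (g i) K)
    (hgtop : ContinuousOn gtop K) :
    ∀ i, ContinuousOn ((Fin.snoc g gtop : Fin (n + 2) → ℝ → ℝ) i) K :=
  Fin.lastCases (by simpa using hgtop) fun i => by simpa using hg i

theorem momentVector_snoc :
    momentVector (Fin.snoc g gtop) μ = Fin.snoc (momentVector g μ) (∫ x, gtop x ∂μ) := by
  funext i
  induction i using Fin.lastCases <;> simp [momentVector]

theorem init_momentVector_snoc :
    Fin.init (momentVector (Fin.snoc g gtop) μ) = momentVector g μ := by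
  rw [momentVector_snoc, Fin.init_snoc]

theorem momentVector_snoc_last :
    momentVector (Fin.snoc g gtop) μ (Fin.last _) = ∫ x, gtop x ∂μ := by
  rw [momentVector_snoc, Fin.snoc_last]

theorem MemMc.momentVector_snoc_mem (hμ : MemMc a b g c μ) (hab : a ≤ b)
    (hg : ∀ i, ContinuousOn (g i) (Icc a b)) (hgtop : ContinuousOn gtop (Icc a b)) :
    momentVector (Fin.snoc g gtop) μ ∈
      {y ∈ momentCone (Fin.snoc g gtop) (Icc a b) | Fin.init y = c} := by
  obtain ⟨_, hμX, hμc⟩ := memMc_iff.1 hμ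
  exact ⟨momentVector_mem_momentCone isCompact_Icc (nonempty_Icc.2 hab)
    (continuousOn_snoc_apply hg hgtop) hμX, init_momentVector_snoc.trans hμc⟩

theorem exists_memMc_momentVector_snoc_eq {y : Fin (n + 2) → ℝ}
    (hy : y ∈ momentCone (Fin.snoc g gtop) (Icc a b)) (hyc : Fin.init y = c) :
    ∃ μ, MemMc a b g c μ ∧ momentVector (Fin.snoc g gtop) μ = y := by
  obtain ⟨μ, hμfin, hμX, rfl⟩ := exists_momentVector_eq hy
  exact ⟨μ, memMc_iff.2 ⟨hμfin, hμX, init_momentVector_snoc.symm.trans hyc⟩, rfl⟩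

theorem IsTPlusSystem.exists_forall_memMc_measureReal_le (hT : IsTPlusSystem a b g) (hab : a < b)
    (hg : ∀ i, ContinuousOn (g i) (Icc a b)) (c : Fin (n + 1) → ℝ) :
    ∃ R, ∀ μ, MemMc a b g c μ → μ.real univ ≤ R := by
  have hK :=
    isCompact_convexHull (isCompact_Icc.image_of_continuousOn (continuousOn_momentCurve hg))
  obtain ⟨z₀, hz₀K, hz₀⟩ := hK.exists_isMinOn ((nonempty_Icc.2 hab.le).image _).convexHull
    continuous_norm.continuousOn
  have hz₀pos : 0 < ‖z₀‖ := norm_pos_iff.2 fun h => hT.zero_notMem_convexHull hab (h ▸ hz₀K)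
  refine ⟨‖c‖ / ‖z₀‖, fun μ hμ => ?_⟩
  obtain ⟨_, hμX, hμc⟩ := memMc_iff.1 hμ
  obtain ⟨z, hzK, hμz⟩ := exists_momentVector_eq_smul isCompact_Icc (nonempty_Icc.2 hab.le) hg hμX
  rw [le_div_iff₀ hz₀pos, ← hμc, hμz, norm_smul, Real.norm_of_nonneg measureReal_nonneg]
  exact mul_le_mul_of_nonneg_left (hz₀ hzK) measureReal_nonneg

theorem IsTPlusSystem.isCompact_setOf_mem_momentCone_init_eq (hT : IsTPlusSystem a b g)
    (hab : a < b) (hg : ∀ i, ContinuousOn (g i) (Icc a b)) (hgtop : ContinuousOn gtop (Icc a b))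
    (c : Fin (n + 1) → ℝ) :
    IsCompact {y ∈ momentCone (Fin.snoc g gtop) (Icc a b) | Fin.init y = c} := by
  obtain ⟨R, hR⟩ := hT.exists_forall_memMc_measureReal_le hab hg c
  have hK := isCompact_convexHull (isCompact_Icc.image_of_continuousOn
    (continuousOn_momentCurve (continuousOn_snoc_apply hg hgtop)))
  -- moment vectors of `M_c` are `mass • z` with the mass bounded by `R`
  have hQ : {y ∈ momentCone (Fin.snoc g gtop) (Icc a b) | Fin.init y = c} =
      (fun q : ℝ × (Fin (n + 2) → ℝ) => q.1 • q.2) ''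
        (Icc 0 R ×ˢ convexHull ℝ (momentCurve (Fin.snoc g gtop) '' Icc a b)) ∩
      {y | Fin.init y = c} := by
    ext y
    constructor
    · rintro ⟨hy, hyc⟩
      obtain ⟨μ, hμ, rfl⟩ := exists_memMc_momentVector_snoc_eq hy hyc
      obtain ⟨_, hμX, -⟩ := memMc_iff.1 hμ
      obtain ⟨z, hzK, hμz⟩ := exists_momentVector_eq_smul isCompact_Icc (nonempty_Icc.2 hab.le)
        (continuousOn_snoc_apply hg hgtop) hμX
      exact ⟨⟨(μ.real univ, z), ⟨⟨measureReal_nonneg, hR μ hμ⟩, hzK⟩, hμz.symm⟩, hyc⟩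
    · rintro ⟨⟨⟨r, z⟩, ⟨⟨hr, -⟩, hzK⟩, rfl⟩, hyc⟩
      exact ⟨(momentCone _ _).smul_mem hr (convexHull_subset_momentCone hzK), hyc⟩
  rw [hQ]
  exact ((isCompact_Icc.prod hK).image (by fun_prop)).inter_right
    (isClosed_eq (by fun_prop) continuous_const)

theorem IsTPlusSystem.exists_isMinOn_and_exists_isMaxOn_integral (hT : IsTPlusSystem a b g)
    (hab : a < b) (hg : ∀ i, ContinuousOn (g i) (Icc a b)) (hgtop : ContinuousOn gtop (Icc a b))
    (hc : ∃ μ, MemMc a b g c μ) :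
    (∃ μ, MemMc a b g c μ ∧ IsMinOn (fun μ => ∫ x, gtop x ∂μ) {μ | MemMc a b g c μ} μ) ∧
      ∃ μ, MemMc a b g c μ ∧ IsMaxOn (fun μ => ∫ x, gtop x ∂μ) {μ | MemMc a b g c μ} μ := by
  have hQ := hT.isCompact_setOf_mem_momentCone_init_eq hab hg hgtop c
  have hmaps : MapsTo (momentVector (Fin.snoc g gtop)) {μ | MemMc a b g c μ} _ :=
    fun μ hμ => hμ.momentVector_snoc_mem hab.le hg hgtop
  have hF :
      (fun μ => ∫ x, gtop x ∂μ) = (fun y => y (Fin.last _)) ∘ momentVector (Fin.snoc g gtop) :=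
    funext fun μ => momentVector_snoc_last.symm
  obtain ⟨μ₀, hμ₀⟩ := hc
  have hlast : Continuous fun y : Fin (n + 2) → ℝ => y (Fin.last _) := continuous_apply _
  obtain ⟨ymin, ⟨hyminC, hyminc⟩, hymin⟩ := hQ.exists_isMinOn ⟨_, hmaps hμ₀⟩ hlast.continuousOn
  obtain ⟨ymax, ⟨hymaxC, hymaxc⟩, hymax⟩ := hQ.exists_isMaxOn ⟨_, hmaps hμ₀⟩ hlast.continuousOn
  obtain ⟨μmin, hμmin, hμminy⟩ := exists_memMc_momentVector_snoc_eq hyminC hyminc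
  obtain ⟨μmax, hμmax, hμmaxy⟩ := exists_memMc_momentVector_snoc_eq hymaxC hymaxc
  rw [hF]
  exact ⟨⟨μmin, hμmin, hymin.comp_mapsTo hmaps hμminy⟩, μmax, hμmax, hymax.comp_mapsTo hmaps hμmaxy⟩

theorem MemMc.momentVector_snoc_notMem_interior_of_isExtrOn (hμ : MemMc a b g c μ)
    (hext : IsExtrOn (fun μ => ∫ x, gtop x ∂μ) {μ | MemMc a b g c μ} μ) :
    momentVector (Fin.snoc g gtop) μ ∉
      interior (momentCone (Fin.snoc g gtop) (Icc a b) : Set (Fin (n + 2) → ℝ)) := by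
  intro hint
  obtain ⟨ε, hε, hball⟩ := Metric.isOpen_iff.1 isOpen_interior _ hint
  have hshift : ∀ σ, |σ| < ε → ∃ ν, MemMc a b g c ν ∧ ∫ x, gtop x ∂ν = ∫ x, gtop x ∂μ + σ := by
    intro σ hσ
    set p := momentVector (Fin.snoc g gtop) μ with hp
    have hdist : dist (p + Pi.single (Fin.last (n + 1)) σ) p < ε := by
      rwa [dist_eq_norm, add_sub_cancel_left, Pi.norm_single, Real.norm_eq_abs]
    have hmem := hball hdist
    have hinit : Fin.init (p + Pi.single (Fin.last (n + 1)) σ) = c := by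
      rw [← (memMc_iff.1 hμ).2.2, ← init_momentVector_snoc (gtop := gtop), ← hp]
      funext i
      simp only [Fin.init, Pi.add_apply, Pi.single_eq_of_ne (Fin.castSucc_lt_last i).ne, add_zero]
    obtain ⟨ν, hν, hνp⟩ := exists_memMc_momentVector_snoc_eq (interior_subset hmem) hinit
    refine ⟨ν, hν, ?_⟩
    rw [← momentVector_snoc_last (g := g), hνp, Pi.add_apply, Pi.single_eq_same, hp,
      momentVector_snoc_last]
  rcases hext with hmin | hmax
  · obtain ⟨ν, hν, hνμ⟩ := hshift (-(ε / 2)) (by rw [abs_neg, abs_of_pos (half_pos hε)]; linarith)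
    linarith [isMinOn_iff.1 hmin ν hν]
  · obtain ⟨ν, hν, hνμ⟩ := hshift (ε / 2) (by rw [abs_of_pos (half_pos hε)]; linarith)
    linarith [isMaxOn_iff.1 hmax ν hν]

theorem IsTPlusSystem.eq_of_isExtrOn_integral (hT' : IsTPlusSystem a b (Fin.snoc g gtop))
    (hab : a < b) (hg : ∀ i, ContinuousOn (g i) (Icc a b)) (hgtop : ContinuousOn gtop (Icc a b))
    (hμ : MemMc a b g c μ) (hν : MemMc a b g c ν) (hμν : ∫ x, gtop x ∂μ = ∫ x, gtop x ∂ν)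
    (hext : IsExtrOn (fun μ => ∫ x, gtop x ∂μ) {μ | MemMc a b g c μ} μ) : μ = ν := by
  obtain ⟨_, hμX, hμc⟩ := memMc_iff.1 hμ
  obtain ⟨_, hνX, hνc⟩ := memMc_iff.1 hν
  refine hT'.isTSystem.eq_of_momentVector_eq_of_notMem_interior hab
    (continuousOn_snoc_apply hg hgtop) hμX hνX ?_
    (hμ.momentVector_snoc_notMem_interior_of_isExtrOn hext)
  rw [momentVector_snoc, momentVector_snoc, hμc, hνc, hμν]

end MomentProblem

/-- If `(g_0, …, g_n)` and `(g_0, …, g_{n+1})` are T₊-systems on `[a, b]` and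
`M_c ≠ ∅`, then `∫ g_{n+1} dμ` attains its maximum (resp. minimum) over
`M_c` at a unique measure `μ_max` (resp. `μ_min`). -/
theorem tplus_unique_max_min (a b : ℝ) (hab : a < b) (n : ℕ)
    (g : Fin (n + 1) → ℝ → ℝ) (gtop : ℝ → ℝ)
    (hg : ∀ i, ContinuousOn (g i) (Set.Icc a b))
    (hgtop : ContinuousOn gtop (Set.Icc a b))
    (hT : IsTPlusSystem a b g)
    (hT' : IsTPlusSystem a b (Fin.snoc g gtop))
    (c : Fin (n + 1) → ℝ) (hc : ∃ μ : Measure ℝ, MemMc a b g c μ) :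
    (∃! μmax : Measure ℝ, MemMc a b g c μmax ∧
      ∀ μ : Measure ℝ, MemMc a b g c μ → ∫ x, gtop x ∂μ ≤ ∫ x, gtop x ∂μmax) ∧
    (∃! μmin : Measure ℝ, MemMc a b g c μmin ∧
      ∀ μ : Measure ℝ, MemMc a b g c μ → ∫ x, gtop x ∂μmin ≤ ∫ x, gtop x ∂μ) := by
  obtain ⟨⟨μmin, hμmin, hmin⟩, μmax, hμmax, hmax⟩ :=
    hT.exists_isMinOn_and_exists_isMaxOn_integral hab hg hgtop hc
  refine ⟨⟨μmax, ⟨hμmax, isMaxOn_iff.1 hmax⟩, fun μ ⟨hμ, hμmax'⟩ => ?_⟩,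
    ⟨μmin, ⟨hμmin, isMinOn_iff.1 hmin⟩, fun μ ⟨hμ, hμmin'⟩ => ?_⟩⟩
  · exact hT'.eq_of_isExtrOn_integral hab hg hgtop hμ hμmax
      (le_antisymm (isMaxOn_iff.1 hmax μ hμ) (hμmax' μmax hμmax)) (.inr (isMaxOn_iff.2 hμmax'))
  · exact hT'.eq_of_isExtrOn_integral hab hg hgtop hμ hμmin
      (le_antisymm (hμmin' μmin hμmin) (isMinOn_iff.1 hmin μ hμ)) (.inl (isMinOn_iff.2 hμmin'))
end
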